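/- Let ζ = e^{2πi/5}. If γ = (γ₀,…,γ₄) ∈ ℚ⁵ with γ_j ∉ ℤ for all j and Σ_{j=0}^{4} γ_j = 0, then ε := Σ_{j=0}^{4} γ_j ζ^{2j} does not belong to ⋃_{k=0}^{4} (ℝ·ζ^k·i + (1 − ζ)), where (1 − ζ) denotes the ideal of ℤ[ζ] generated by 1 − ζ, regarded as a subset of ℂ. -/

import Mathlib

/-- `ζ = e^{2πi/5}`. -/
noncomputable def zeta5 : ℂ := Complex.exp (2 * Real.pi * Complex.I / 5)

/-- The ring `ℤ[ζ₅]` as a subring of `ℂ`. -/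
def Zzeta5 : Subring ℂ := Subring.closure {zeta5}


lemma zeta5_prim : IsPrimitiveRoot zeta5 5 := by
  have := Complex.isPrimitiveRoot_exp 5 (by norm_num)
  simpa [zeta5] using this

lemma zeta5_pow5 : zeta5 ^ 5 = 1 := zeta5_prim.pow_eq_one

lemma zeta5_phi : zeta5 ^ 4 + zeta5 ^ 3 + zeta5 ^ 2 + zeta5 + 1 = 0 := by
  have h1 : zeta5 ≠ 1 := zeta5_prim.ne_one (by norm_num)
  have h : (zeta5 - 1) * (zeta5 ^ 4 + zeta5 ^ 3 + zeta5 ^ 2 + zeta5 + 1) = 0 := by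
    linear_combination zeta5_pow5
  rcases mul_eq_zero.1 h with h' | h'
  · exact absurd (sub_eq_zero.1 h') h1
  · exact h'

lemma zeta5_conj : (starRingEnd ℂ) zeta5 = zeta5 ^ 4 := by
  have h1 : (starRingEnd ℂ) zeta5 = zeta5⁻¹ := by
    rw [zeta5, ← Complex.exp_conj, ← Complex.exp_neg]
    congr 1
    simp only [map_div₀, map_mul, map_ofNat, Complex.conj_I, Complex.conj_ofReal]
    ring
  have h2 : zeta5 ^ 4 * zeta5 = 1 := by linear_combination zeta5_pow5
  rw [h1, (eq_inv_of_mul_eq_one_left h2).symm]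

open Polynomial in
lemma zeta5_indep (d0 d1 d2 d3 : ℚ)
    (h : (d0 : ℂ) + d1 * zeta5 + d2 * zeta5 ^ 2 + d3 * zeta5 ^ 3 = 0) :
    d0 = 0 ∧ d1 = 0 ∧ d2 = 0 ∧ d3 = 0 := by
  set q : ℚ[X] := C d0 + C d1 * X + C d2 * X ^ 2 + C d3 * X ^ 3 with hq
  have hev : aeval zeta5 q = 0 := by
    rw [hq]
    simp only [map_add, map_mul, map_pow, aeval_C, aeval_X]
    rw [show (algebraMap ℚ ℂ) = (Rat.castHom ℂ : ℚ →+* ℂ) from by ext; simp [eq_ratCast]]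
    simpa using h
  have hq0 : q = 0 := by
    by_contra hne
    have hdvd := minpoly.dvd ℚ zeta5 hev
    have hdeg := Polynomial.degree_le_of_dvd hdvd hne
    rw [← Polynomial.cyclotomic_eq_minpoly_rat zeta5_prim (by norm_num),
      Polynomial.degree_cyclotomic] at hdeg
    have h3 : q.degree ≤ 3 := by
      rw [hq]
      compute_degree
    have : Nat.totient 5 = 4 := by decide
    rw [this] at hdeg
    have := le_trans hdeg h3
    norm_num at this
  refine ⟨?_, ?_, ?_, ?_⟩
  · have := congrArg (fun p => Polynomial.coeff p 0) hq0
    simpa [hq, Polynomial.coeff_X, Polynomial.coeff_X_pow] using this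
  · have := congrArg (fun p => Polynomial.coeff p 1) hq0
    simpa [hq, Polynomial.coeff_X, Polynomial.coeff_X_pow] using this
  · have := congrArg (fun p => Polynomial.coeff p 2) hq0
    simpa [hq, Polynomial.coeff_X, Polynomial.coeff_X_pow] using this
  · have := congrArg (fun p => Polynomial.coeff p 3) hq0
    simpa [hq, Polynomial.coeff_X, Polynomial.coeff_X_pow] using this

open Polynomial in
lemma zeta5_rep {w : ℂ} (hw : w ∈ Zzeta5) :
    ∃ a0 a1 a2 a3 : ℤ, w = (a0 : ℂ) + a1 * zeta5 + a2 * zeta5 ^ 2 + a3 * zeta5 ^ 3 := by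
  have hsub : Zzeta5 ≤ ((aeval zeta5 : ℤ[X] →ₐ[ℤ] ℂ) : ℤ[X] →+* ℂ).range := by
    rw [Zzeta5, Subring.closure_le]
    rintro x hx
    rw [Set.mem_singleton_iff] at hx
    exact ⟨X, by simp [hx]⟩
  obtain ⟨P, hP⟩ := hsub hw
  have hmonic : (cyclotomic 5 ℤ).Monic := cyclotomic.monic 5 ℤ
  have hval : aeval zeta5 (cyclotomic 5 ℤ) = 0 := by
    haveI : Fact (Nat.Prime 5) := ⟨by norm_num⟩
    rw [cyclotomic_prime]
    simp only [map_sum, map_pow, aeval_X]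
    rw [Finset.sum_range_succ, Finset.sum_range_succ, Finset.sum_range_succ,
      Finset.sum_range_succ, Finset.sum_range_succ, Finset.sum_range_zero]
    linear_combination zeta5_phi
  set r := P %ₘ (cyclotomic 5 ℤ) with hr
  have hw2 : w = aeval zeta5 r := by
    rw [← hP]
    conv_lhs => rw [← Polynomial.modByMonic_add_div P (cyclotomic 5 ℤ)]
    simp [hval, hr]
  have hdeg : r.natDegree < 4 := by
    rcases eq_or_ne r 0 with h0 | h0
    · simp [h0]
    · have := Polynomial.degree_modByMonic_lt P hmonic
      rw [Polynomial.degree_cyclotomic, show Nat.totient 5 = 4 from by decide] at this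
      exact (Polynomial.natDegree_lt_iff_degree_lt h0).2 (by exact_mod_cast this)
  refine ⟨r.coeff 0, r.coeff 1, r.coeff 2, r.coeff 3, ?_⟩
  rw [hw2, Polynomial.aeval_eq_sum_range' hdeg]
  rw [Finset.sum_range_succ, Finset.sum_range_succ, Finset.sum_range_succ,
    Finset.sum_range_succ, Finset.sum_range_zero]
  simp only [zsmul_eq_mul]
  push_cast
  ring

theorem stmt14 (γ : Fin 5 → ℚ) (hγ : ∀ j, ¬∃ n : ℤ, γ j = n) (hsum : ∑ j, γ j = 0) :
    ¬∃ k : Fin 5, ∃ t : ℝ, ∃ y ∈ Zzeta5,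
      (∑ j, (γ j : ℂ) * zeta5 ^ (2 * (j : ℕ))) =
        (t : ℂ) * zeta5 ^ (k : ℕ) * Complex.I + (1 - zeta5) * y := by
  rintro ⟨k, t, y, hy, heq⟩
  obtain ⟨a0, a1, a2, a3, hrep⟩ := zeta5_rep hy
  rw [hrep] at heq
  rw [Fin.sum_univ_five] at heq hsum
  simp only [show ((0:Fin 5):ℕ)=0 from rfl, show ((1:Fin 5):ℕ)=1 from rfl,
      show ((2:Fin 5):ℕ)=2 from rfl, show ((3:Fin 5):ℕ)=3 from rfl,
      show ((4:Fin 5):ℕ)=4 from rfl] at heq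
  norm_num at heq
  have heq2 : (γ 0 : ℂ) * (zeta5^4) ^ (2*(0:ℕ)) + (γ 1 : ℂ) * (zeta5^4) ^ (2*(1:ℕ))
      + (γ 2 : ℂ) * (zeta5^4) ^ (2*(2:ℕ)) + (γ 3 : ℂ) * (zeta5^4) ^ (2*(3:ℕ))
      + (γ 4 : ℂ) * (zeta5^4) ^ (2*(4:ℕ)) =
      (t : ℂ) * (zeta5^4) ^ (k : ℕ) * (-Complex.I) +
        (1 - zeta5^4) * ((a0:ℂ) + (a1:ℂ)*zeta5^4 + (a2:ℂ)*(zeta5^4)^2 + (a3:ℂ)*(zeta5^4)^3) := by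
    have hc := congrArg (starRingEnd ℂ) heq
    simp only [map_add, map_mul, map_pow, map_sub, map_one, map_intCast, map_ratCast,
      Complex.conj_ofReal, Complex.conj_I, zeta5_conj,
      show ((0:Fin 5):ℕ)=0 from rfl, show ((1:Fin 5):ℕ)=1 from rfl,
      show ((2:Fin 5):ℕ)=2 from rfl, show ((3:Fin 5):ℕ)=3 from rfl,
      show ((4:Fin 5):ℕ)=4 from rfl] at hc
    norm_num
    linear_combination hc
  norm_num at heq2
  fin_cases k <;> norm_num at heq heq2
  · -- k = 0
    obtain ⟨h0, h1, h2, h3⟩ := zeta5_indep (-3*(a0:ℚ) + (a1:ℚ) - (a3:ℚ) + 2*γ 0 - γ 2 - γ 3) (0) (-(a0:ℚ) + 2*(a1:ℚ) - 2*(a3:ℚ) + γ 1 - γ 2 - γ 3 + γ 4) (-(a0:ℚ) + 2*(a1:ℚ) - 2*(a3:ℚ) + γ 1 - γ 2 - γ 3 + γ 4) (by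
      push_cast
      linear_combination heq + zeta5^0 * heq2 - (((γ 4:ℂ))*zeta5^27 + ((γ 4:ℂ))*zeta5^22 + ((γ 3:ℂ))*zeta5^19 + ((γ 4:ℂ))*zeta5^17 + ((γ 3:ℂ))*zeta5^14 + ((γ 4:ℂ))*zeta5^12 + ((a3:ℂ) + (γ 2:ℂ))*zeta5^11 + ((γ 3:ℂ))*zeta5^9 + ((a2:ℂ) - (a3:ℂ) + (γ 4:ℂ))*zeta5^7 + ((a3:ℂ) + (γ 2:ℂ))*zeta5^6 + ((γ 3:ℂ))*zeta5^4 + ((a1:ℂ) - (a2:ℂ) + (γ 1:ℂ) + (γ 4:ℂ))*zeta5^3 + ((a2:ℂ) - (a3:ℂ) + (γ 4:ℂ))*zeta5^2 + ((a3:ℂ) + (γ 2:ℂ) + (γ 3:ℂ))*zeta5) * zeta5_pow5 - ((a0:ℂ) - (a1:ℂ) + (a3:ℂ) + (γ 2:ℂ) + (γ 3:ℂ)) * zeta5_phi)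
    exact hγ 0 ⟨(a0 : ℤ), by push_cast at h0 h1 h2 h3 ⊢; linarith⟩
  · -- k = 1
    obtain ⟨h0, h1, h2, h3⟩ := zeta5_indep (-(a0:ℚ) + (a1:ℚ) - 2*(a2:ℚ) + γ 0 + γ 1 - γ 2 - γ 4) (2*(a0:ℚ) - 2*(a1:ℚ) - (a2:ℚ) - γ 2 + 2*γ 3 - γ 4) (-(a0:ℚ) + (a1:ℚ) - 2*(a2:ℚ) + γ 0 + γ 1 - γ 2 - γ 4) (0) (by
      push_cast
      linear_combination heq + zeta5^2 * heq2 - (((γ 4:ℂ))*zeta5^29 + ((γ 4:ℂ))*zeta5^24 + ((γ 3:ℂ))*zeta5^21 + ((γ 4:ℂ))*zeta5^19 + ((γ 3:ℂ))*zeta5^16 + ((γ 4:ℂ))*zeta5^14 + ((a3:ℂ) + (γ 2:ℂ))*zeta5^13 + ((γ 3:ℂ))*zeta5^11 + ((a2:ℂ) - (a3:ℂ) + (γ 4:ℂ))*zeta5^9 + ((a3:ℂ) + (γ 2:ℂ))*zeta5^8 + ((γ 3:ℂ))*zeta5^6 + ((a1:ℂ) - (a2:ℂ) + (γ 1:ℂ))*zeta5^5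 + ((a2:ℂ) - (a3:ℂ) + (γ 4:ℂ))*zeta5^4 + ((a3:ℂ) + (γ 2:ℂ) + (γ 4:ℂ))*zeta5^3 + ((a0:ℂ) - (a1:ℂ) + 2*(γ 3:ℂ) + (t:ℂ)*Complex.I)*zeta5 + ((a1:ℂ) - (a2:ℂ) + (γ 1:ℂ))) * zeta5_pow5 - ((a2:ℂ) + (γ 2:ℂ) + (γ 4:ℂ)) * zeta5_phi)
    exact hγ 3 ⟨(a1 - a0 : ℤ), by push_cast at h0 h1 h2 h3 ⊢; linarith⟩
  · -- k = 2
    obtain ⟨h0, h1, h2, h3⟩ := zeta5_indep (0) (2*(a0:ℚ) - (a1:ℚ) + (a2:ℚ) - 2*(a3:ℚ) - γ 0 - γ 2 + γ 3 + γ 4) ((a0:ℚ) + 2*(a1:ℚ) - 2*(a2:ℚ) - (a3:ℚ) - γ 0 + 2*γ 1 - γ 2) (2*(a0:ℚ) - (a1:ℚ) + (a2:ℚ) - 2*(a3:ℚ) - γ 0 - γ 2 + γ 3 + γ 4) (by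
      push_cast
      linear_combination heq + zeta5^4 * heq2 - (((γ 4:ℂ))*zeta5^31 + ((γ 4:ℂ))*zeta5^26 + ((γ 3:ℂ))*zeta5^23 + ((γ 4:ℂ))*zeta5^21 + ((γ 3:ℂ))*zeta5^18 + ((γ 4:ℂ))*zeta5^16 + ((a3:ℂ) + (γ 2:ℂ))*zeta5^15 + ((γ 3:ℂ))*zeta5^13 + ((a2:ℂ) - (a3:ℂ) + (γ 4:ℂ))*zeta5^11 + ((a3:ℂ) + (γ 2:ℂ))*zeta5^10 + ((γ 3:ℂ))*zeta5^8 + ((a1:ℂ) - (a2:ℂ) + (γ 1:ℂ) + (t:ℂ)*Complex.I)*zeta5^7 + ((a2:ℂ) - (a3:ℂ) + (γ 4:ℂ))*zeta5^6 + ((a3:ℂ) + (γ 2:ℂ))*zeta5^5 + ((a0:ℂ) - (a1:ℂ) + (γ 3:ℂ) + (γ 4:ℂ))*zeta5^3 + ((a1:ℂ) - (a2:ℂ) + (γ 1:ℂ) + (t:ℂ)*Complex.I)*zeta5^2 + ((a2:ℂ) - (a3:ℂ) + (γ 3:ℂ) + (γ 4:ℂ))*zeta5 + ((a3:ℂ)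 + (γ 2:ℂ))) * zeta5_pow5 - (-(a0:ℂ) + (a3:ℂ) + (γ 0:ℂ) + (γ 2:ℂ)) * zeta5_phi)
    exact hγ 1 ⟨(a2 - a1 : ℤ), by push_cast at h0 h1 h2 h3 ⊢; linarith⟩
  · -- k = 3
    obtain ⟨h0, h1, h2, h3⟩ := zeta5_indep (-2*(a1:ℚ) + (a2:ℚ) - (a3:ℚ) + γ 0 - γ 1 - γ 2 + γ 3) (-2*(a1:ℚ) + (a2:ℚ) - (a3:ℚ) + γ 0 - γ 1 - γ 2 + γ 3) (0) (-(a1:ℚ) + 3*(a2:ℚ) - 3*(a3:ℚ) - γ 1 - γ 2 + 2*γ 4) (by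
      push_cast
      linear_combination heq + zeta5^6 * heq2 - (((γ 4:ℂ))*zeta5^33 + ((γ 4:ℂ))*zeta5^28 + ((γ 3:ℂ))*zeta5^25 + ((γ 4:ℂ))*zeta5^23 + ((γ 3:ℂ))*zeta5^20 + ((γ 4:ℂ))*zeta5^18 + ((a3:ℂ) + (γ 2:ℂ))*zeta5^17 + ((γ 3:ℂ))*zeta5^15 + ((a2:ℂ) - (a3:ℂ) + (γ 4:ℂ) + (t:ℂ)*Complex.I)*zeta5^13 + ((a3:ℂ) + (γ 2:ℂ))*zeta5^12 + ((γ 3:ℂ))*zeta5^10 + ((a1:ℂ) - (a2:ℂ) + (γ 1:ℂ))*zeta5^9 + ((a2:ℂ) - (a3:ℂ) + (γ 4:ℂ) + (t:ℂ)*Complex.I)*zeta5^8 + ((a3:ℂ) + (γ 2:ℂ))*zeta5^7 + ((a0:ℂ) - (a1:ℂ) + (γ 3:ℂ))*zeta5^5 + ((a1:ℂ) - (a2:ℂ) + (γ 1:ℂ))*zeta5^4 + ((a2:ℂ) - (a3:ℂ) + 2*(γ 4:ℂ) + (t:ℂ)*Complex.I)*zeta5^3 + ((a3:ℂ) + (γ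 2:ℂ))*zeta5^2 + (-(a0:ℂ) + (γ 0:ℂ) + (γ 3:ℂ))*zeta5 + ((a0:ℂ) - (a1:ℂ) + (γ 3:ℂ))) * zeta5_pow5 - ((a1:ℂ) - (a2:ℂ) + (a3:ℂ) + (γ 1:ℂ) + (γ 2:ℂ)) * zeta5_phi)
    exact hγ 4 ⟨(a3 - a2 : ℤ), by push_cast at h0 h1 h2 h3 ⊢; linarith⟩
  · -- k = 4
    obtain ⟨h0, h1, h2, h3⟩ := zeta5_indep (-(a0:ℚ) + (a2:ℚ) - 3*(a3:ℚ) + γ 0 - 2*γ 2 + γ 4) ((a0:ℚ) - (a2:ℚ) - 2*(a3:ℚ) + γ 1 - 2*γ 2 + γ 3) ((a0:ℚ) - (a2:ℚ) - 2*(a3:ℚ) + γ 1 - 2*γ 2 + γ 3) (-(a0:ℚ) + (a2:ℚ) - 3*(a3:ℚ) + γ 0 - 2*γ 2 + γ 4) (by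
      push_cast
      linear_combination heq + zeta5^8 * heq2 - (((γ 4:ℂ))*zeta5^35 + ((γ 4:ℂ))*zeta5^30 + ((γ 3:ℂ))*zeta5^27 + ((γ 4:ℂ))*zeta5^25 + ((γ 3:ℂ))*zeta5^22 + ((γ 4:ℂ))*zeta5^20 + ((a3:ℂ) + (γ 2:ℂ) + (t:ℂ)*Complex.I)*zeta5^19 + ((γ 3:ℂ))*zeta5^17 + ((a2:ℂ) - (a3:ℂ) + (γ 4:ℂ))*zeta5^15 + ((a3:ℂ) + (γ 2:ℂ) + (t:ℂ)*Complex.I)*zeta5^14 + ((γ 3:ℂ))*zeta5^12 + ((a1:ℂ) - (a2:ℂ) + (γ 1:ℂ))*zeta5^11 + ((a2:ℂ) - (a3:ℂ) + (γ 4:ℂ))*zeta5^10 + ((a3:ℂ) + (γ 2:ℂ) + (t:ℂ)*Complex.I)*zeta5^9 + ((a0:ℂ) - (a1:ℂ) + (γ 3:ℂ))*zeta5^7 + ((a1:ℂ) - (a2:ℂ) + (γ 1:ℂ))*zeta5^6 + ((a2:ℂ) - (a3:ℂ) + (γ 4:ℂ))*zeta5^5 + ((a3:ℂ) + (γ 2:ℂ)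 + (t:ℂ)*Complex.I)*zeta5^4 + (-(a0:ℂ) + (γ 0:ℂ) + (γ 4:ℂ))*zeta5^3 + ((a0:ℂ) - (a1:ℂ) + (γ 3:ℂ))*zeta5^2 + ((a1:ℂ) - (a2:ℂ) + (γ 1:ℂ) + (γ 3:ℂ))*zeta5 + ((a2:ℂ) - (a3:ℂ) + (γ 4:ℂ))) * zeta5_pow5 - (2*(a3:ℂ) + 2*(γ 2:ℂ)) * zeta5_phi)
    exact hγ 2 ⟨(-a3 : ℤ), by push_cast at h0 h1 h2 h3 ⊢; linarith⟩
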